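/- arXiv:2206.00984 — 2 statements merged into one kernel-verified Lean document; each statement's English description precedes it below -/
import Mathlib

section
/- Let ξ_j = ψ_j e^{-iθ_j} where ψ_j solves ψ̇_j = i a_j ψ_j + (κ/N) Σ_k (ψ_k - ⟨ψ_j, ψ_k⟩ ψ_j) with unit-norm states and θ_j solves θ̇_j = a_j + (2κ/N) Σ_k sin(θ_k - θ_j). Then h_{ij} := ⟨ξ_i, ξ_j⟩ satisfies ḣ_{ij} = (κ/N) Σ_k [ e^{i(θ_k-θ_i)}(h_{kj} - h_{ij}) + e^{i(θ_i-θ_k)}(1 - h_{ik}) h_{ij} + e^{i(θ_j-θ_k)}(h_{ik} - h_{ij}) + e^{i(θ_k-θ_j)}(1 - h_{kj}) h_{ij} ]. -/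
/-!
Pass to the frame rotating with the Kuramoto phases, `ξ_j = e^{-iθ_j} ψ_j`. There the natural
frequencies `a_j` cancel, and since `2i sin x = e^{ix} - e^{-ix}` the Kuramoto drift combines with
the Lohe coupling into
`ξ̇_j = (κ/N) Σ_k [e^{i(θ_k-θ_j)} (ξ_k - ξ_j) + e^{i(θ_j-θ_k)} (1 - h_{jk}) ξ_j]`.
The product rule for `h_{ij} = ⟨ξ_i, ξ_j⟩` then produces the four terms, two from each factor.
Mathlib's `inner ℂ x y` is conjugate-linear in `x`, so `h_{ij}` is `inner ℂ (ξ j) (ξ i)`.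
-/

open Complex ComplexConjugate Finset

theorem two_mul_sin_mul_I (x : ℝ) :
    ((2 * Real.sin x : ℝ) : ℂ) * I = exp (x * I) - exp (-x * I) := by
  rw [exp_mul_I, exp_mul_I, cos_neg, sin_neg]
  push_cast
  ring

theorem conj_exp_ofReal_mul_I (x : ℝ) : conj (exp (x * I)) = exp ((-x : ℝ) * I) := by
  rw [← exp_conj, map_mul, conj_ofReal, conj_I, ofReal_neg, neg_mul, mul_neg]

section

variable {E : Type*} [NormedAddCommGroup E] [InnerProductSpace ℂ E]

theorem hasDerivAt_exp_neg_mul_I_smul {ψ : ℝ → E} {ψ' : E} {θ : ℝ → ℝ} {θ' t : ℝ}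
    (hψ : HasDerivAt ψ ψ' t) (hθ : HasDerivAt θ θ' t) :
    HasDerivAt (fun s => exp (-θ s * I) • ψ s)
      (exp (-θ t * I) • (ψ' - ((θ' : ℂ) * I) • ψ t)) t := by
  have hexp : HasDerivAt (fun s => exp (-θ s * I)) (exp (-θ t * I) * (-θ' * I)) t :=
    (hθ.ofReal_comp.neg.mul_const I).cexp
  refine (hexp.smul hψ).congr_deriv ?_
  module

theorem exp_neg_mul_I_smul_coupling (u v : E) (α β : ℝ) :
    exp (-β * I) • (u - inner ℂ u v • v - ((2 * Real.sin (α - β) : ℝ) * I) • v) =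
      exp ((α - β : ℝ) * I) • (exp (-α * I) • u - exp (-β * I) • v) +
        (exp ((β - α : ℝ) * I) * (1 - inner ℂ (exp (-α * I) • u) (exp (-β * I) • v))) •
          exp (-β * I) • v := by
  rw [two_mul_sin_mul_I, inner_smul_left, inner_smul_right, ← exp_conj]
  simp only [map_mul, map_neg, conj_ofReal, conj_I, mul_neg, neg_mul, neg_neg]
  push_cast
  simp only [sub_mul, exp_sub, exp_neg]
  have hα := exp_ne_zero (α * I)
  have hβ := exp_ne_zero (β * I)
  match_scalars
  · field_simp
  · field_simp
    ring

variable {ι : Type*} [Fintype ι]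

noncomputable def corotatingField (c : ℝ) (φ : ι → ℝ) (x : ι → E) (j : ι) : E :=
  (c : ℂ) • ∑ k, (exp ((φ k - φ j : ℝ) * I) • (x k - x j) +
    (exp ((φ j - φ k : ℝ) * I) * (1 - inner ℂ (x k) (x j))) • x j)

theorem hasDerivAt_corotatingField {a : ι → ℝ} {c : ℝ} {ψ ξ : ι → ℝ → E} {θ : ι → ℝ → ℝ} {j : ι}
    {t : ℝ} (hξ : ∀ k s, ξ k s = exp (-θ k s * I) • ψ k s)
    (hψ : HasDerivAt (ψ j)
      ((I * (a j : ℂ)) • ψ j t + c • ∑ k, (ψ k t - (inner ℂ (ψ k t) (ψ j t) : ℂ) • ψ j t)) t)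
    (hθ : HasDerivAt (θ j) (a j + 2 * c * ∑ k, Real.sin (θ k t - θ j t)) t) :
    HasDerivAt (ξ j) (corotatingField c (θ · t) (ξ · t) j) t := by
  rw [show ξ j = fun s => exp (-θ j s * I) • ψ j s from funext (hξ j)]
  refine (hasDerivAt_exp_neg_mul_I_smul hψ hθ).congr_deriv ?_
  simp only [corotatingField, hξ, ← exp_neg_mul_I_smul_coupling, ← smul_sum, sum_sub_distrib,
    ← sum_smul]
  rw [← Complex.coe_smul]
  push_cast
  simp only [← sum_mul, ← mul_sum]
  module

theorem hasDerivAt_inner_of_corotatingField {c : ℝ} {φ : ι → ℝ} {ξ : ι → ℝ → E} {i j : ι} {t : ℝ}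
    (hi : HasDerivAt (ξ i) (corotatingField c φ (ξ · t) i) t)
    (hj : HasDerivAt (ξ j) (corotatingField c φ (ξ · t) j) t) :
    HasDerivAt (fun s => inner ℂ (ξ j s) (ξ i s))
      (c * ∑ k,
        (exp ((φ k - φ i : ℝ) * I) * (inner ℂ (ξ j t) (ξ k t) - inner ℂ (ξ j t) (ξ i t)) +
         exp ((φ i - φ k : ℝ) * I) * (1 - inner ℂ (ξ k t) (ξ i t)) * inner ℂ (ξ j t) (ξ i t) +
         exp ((φ j - φ k : ℝ) * I) * (inner ℂ (ξ k t) (ξ i t) - inner ℂ (ξ j t) (ξ i t)) +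
         exp ((φ k - φ j : ℝ) * I) * (1 - inner ℂ (ξ j t) (ξ k t)) * inner ℂ (ξ j t) (ξ i t)))
      t := by
  refine (hj.inner ℂ hi).congr_deriv ?_
  simp only [corotatingField, inner_smul_left, inner_smul_right, inner_sum, sum_inner,
    inner_add_left, inner_add_right, inner_sub_left, inner_sub_right, map_mul, map_sub, map_one,
    conj_ofReal, conj_exp_ofReal_mul_I, inner_conj_symm, neg_sub, mul_sum, ← sum_add_distrib]
  refine sum_congr rfl fun k _ => ?_
  ring

end

theorem stmt_13_general (d N : ℕ) (a : Fin N → ℝ) (κ : ℝ)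
    (ψ : Fin N → ℝ → EuclideanSpace ℂ (Fin d)) (θ : Fin N → ℝ → ℝ)
    (hψ : ∀ j t, HasDerivAt (ψ j)
      ((Complex.I * (a j : ℂ)) • ψ j t +
        (κ / N) • ∑ k, (ψ k t - (inner ℂ (ψ k t) (ψ j t) : ℂ) • ψ j t)) t)
    (hθ : ∀ j t, HasDerivAt (θ j) (a j + (2 * κ / N) * ∑ k, Real.sin (θ k t - θ j t)) t)
    (ξ : Fin N → ℝ → EuclideanSpace ℂ (Fin d))
    (hξ : ∀ j t, ξ j t = Complex.exp (-(θ j t : ℂ) * Complex.I) • ψ j t)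
    (h : Fin N → Fin N → ℝ → ℂ)
    (hh : ∀ i j t, h i j t = inner ℂ (ξ j t) (ξ i t)) :
    ∀ i j t, HasDerivAt (h i j)
      (((κ : ℂ) / (N : ℂ)) * ∑ k,
        (Complex.exp (((θ k t - θ i t : ℝ) : ℂ) * Complex.I) * (h k j t - h i j t) +
         Complex.exp (((θ i t - θ k t : ℝ) : ℂ) * Complex.I) * (1 - h i k t) * h i j t +
         Complex.exp (((θ j t - θ k t : ℝ) : ℂ) * Complex.I) * (h i k t - h i j t) +
         Complex.exp (((θ k t - θ j t : ℝ) : ℂ) * Complex.I) * (1 - h k j t) * h i j t)) t := by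
  intro i j t
  have hξ' : ∀ j, HasDerivAt (ξ j) (corotatingField (κ / N) (θ · t) (ξ · t) j) t := fun j =>
    hasDerivAt_corotatingField hξ (hψ j t) (by simpa only [mul_div_assoc] using hθ j t)
  simpa only [← hh, ofReal_div, ofReal_natCast] using
    hasDerivAt_inner_of_corotatingField (hξ' i) (hξ' j)

theorem stmt_13 (d N : ℕ) (a : Fin N → ℝ) (κ : ℝ) (hκ : 0 < κ)
    (ψ : Fin N → ℝ → EuclideanSpace ℂ (Fin d)) (θ : Fin N → ℝ → ℝ)
    (hunit : ∀ j t, ‖ψ j t‖ = 1)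
    (hψ : ∀ j t, HasDerivAt (ψ j)
      ((Complex.I * (a j : ℂ)) • ψ j t +
        (κ / N) • ∑ k, (ψ k t - (inner ℂ (ψ k t) (ψ j t) : ℂ) • ψ j t)) t)
    (hθ : ∀ j t, HasDerivAt (θ j) (a j + (2 * κ / N) * ∑ k, Real.sin (θ k t - θ j t)) t)
    (ξ : Fin N → ℝ → EuclideanSpace ℂ (Fin d))
    (hξ : ∀ j t, ξ j t = Complex.exp (-(θ j t : ℂ) * Complex.I) • ψ j t)
    (h : Fin N → Fin N → ℝ → ℂ)
    (hh : ∀ i j t, h i j t = inner ℂ (ξ j t) (ξ i t)) :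
    ∀ i j t, HasDerivAt (h i j)
      (((κ : ℂ) / (N : ℂ)) * ∑ k,
        (Complex.exp (((θ k t - θ i t : ℝ) : ℂ) * Complex.I) * (h k j t - h i j t) +
         Complex.exp (((θ i t - θ k t : ℝ) : ℂ) * Complex.I) * (1 - h i k t) * h i j t +
         Complex.exp (((θ j t - θ k t : ℝ) : ℂ) * Complex.I) * (h i k t - h i j t) +
         Complex.exp (((θ k t - θ j t : ℝ) : ℂ) * Complex.I) * (1 - h k j t) * h i j t)) t :=
  stmt_13_general d N a κ ψ θ hψ hθ ξ hξ h hh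
end

section
/- Suppose the complex scalars h_{ij}(t) (i,j ∈ [N]) satisfy |h_{ij}| ≤ 1 and d/dt(1 - h_{ij}) = -2κ(1-h_{ij}) + (κ/N)Σ_k (1-h_{ik} + 1-h_{kj})(1-h_{ij}) + E_{ij}(t), where the error term satisfies |E_{ij}(t)| ≤ 12κ sin(D(Θ(t))/2) · D(𝓗(t)) with D(𝓗) = max_{i,j}|1-h_{ij}|. Then the (upper Dini) derivative of D(𝓗) satisfies D'(𝓗) ≤ -2κ(1 - 6 sin(D(Θ)/2)) D(𝓗) + 2κ D(𝓗)². -/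
/-!
At an entry `z = 1 - h i j` attaining the maximum `D > 0`, `‖z‖` is differentiable with derivative
`⟪z, ż⟫ / ‖z‖`. The drift is `(-2κ + (κ/N) ∑ₖ (z_ik + z_kj)) z + E`, and `|∑ₖ (z_ik + z_kj)| ≤ 2 N D`
together with `‖E‖ ≤ 12 κ sin(D(Θ)/2) D` gives the bound; when `D = 0` the whole drift vanishes.
Entries strictly below the maximum stay below it for short times, so the upper right Dini
derivative of the finite maximum is controlled by the derivatives of the maximizing entries.
-/

open Filter Finset Topology RealInnerProductSpace

section NormDeriv

variable {F : Type*} [NormedAddCommGroup F] [InnerProductSpace ℝ F] {f : ℝ → F} {v : F} {x : ℝ}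

theorem HasDerivAt.norm (hf : HasDerivAt f v x) (h0 : f x ≠ 0) :
    HasDerivAt (‖f ·‖) (⟪f x, v⟫ / ‖f x‖) x := by
  have := hf.norm_sq.sqrt (by positivity)
  simp only [Real.sqrt_sq (norm_nonneg _)] at this
  convert this using 1
  field_simp

theorem HasDerivAt.norm_of_eq_zero (hf : HasDerivAt f 0 x) (h0 : f x = 0) :
    HasDerivAt (‖f ·‖) 0 x := by
  rw [hasDerivAt_iff_isLittleO] at hf ⊢
  simpa [h0] using hf.norm_left

end NormDeriv

section FiniteMax

variable {ι : Type*} {s : Finset ι} (hs : s.Nonempty) {g : ι → ℝ → ℝ} {t : ℝ}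

theorem eventually_lt_add_mul_of_hasDerivAt {f : ℝ → ℝ} {d b : ℝ} (hf : HasDerivAt f d t)
    (hdb : d < b) : ∀ᶠ u in 𝓝[>] 0, f (t + u) < f t + u * b := by
  filter_upwards [hf.tendsto_slope_zero_right.eventually (eventually_lt_nhds hdb),
    self_mem_nhdsWithin] with u hu (hu0 : 0 < u)
  rw [smul_eq_mul, inv_mul_lt_iff₀ hu0] at hu
  linarith

theorem eventually_add_mul_lt_of_hasDerivAt {f : ℝ → ℝ} {d b : ℝ} (hf : HasDerivAt f d t)
    (hbd : b < d) : ∀ᶠ u in 𝓝[>] 0, f t + u * b < f (t + u) := by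
  filter_upwards [hf.tendsto_slope_zero_right.eventually (eventually_gt_nhds hbd),
    self_mem_nhdsWithin] with u hu (hu0 : 0 < u)
  rw [smul_eq_mul, lt_inv_mul_iff₀ hu0] at hu
  linarith

theorem eventually_sup'_le_add_mul {b : ℝ} (hcont : ∀ i ∈ s, ContinuousAt (g i) t)
    (hderiv : ∀ i ∈ s, g i t = s.sup' hs (g · t) → ∃ d < b, HasDerivAt (g i) d t) :
    ∀ᶠ u in 𝓝[>] 0, s.sup' hs (g · (t + u)) ≤ s.sup' hs (g · t) + u * b := by
  have hi : ∀ i ∈ s, ∀ᶠ u in 𝓝[>] 0, g i (t + u) ≤ s.sup' hs (g · t) + u * b := by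
    intro i hi
    rcases (le_sup' (g · t) hi).lt_or_eq with hlt | heq
    · have hg : ContinuousAt (fun u => g i (t + u)) 0 :=
        (hcont i hi).comp_of_eq (continuous_const_add t).continuousAt (add_zero t)
      have hlim : Tendsto (fun u => s.sup' hs (g · t) + u * b - g i (t + u)) (𝓝 0)
          (𝓝 (s.sup' hs (g · t) - g i t)) := by
        simpa using ((continuous_const.add (continuous_mul_const b)).tendsto 0).sub hg.tendsto
      filter_upwards [nhdsWithin_le_nhds (hlim.eventually (eventually_gt_nhds (sub_pos.2 hlt)))]
        with u hu
      linarith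
    · obtain ⟨d, hdb, hd⟩ := hderiv i hi heq
      filter_upwards [eventually_lt_add_mul_of_hasDerivAt hd hdb] with u hu
      rw [← heq]
      exact hu.le
  filter_upwards [(eventually_all_finset s).2 hi] with u hu
  exact sup'_le hs _ hu

theorem isBoundedUnder_ge_slope_sup' {i : ι} (hi : i ∈ s) (hmax : g i t = s.sup' hs (g · t))
    {d : ℝ} (hd : HasDerivAt (g i) d t) :
    IsBoundedUnder (· ≥ ·) (𝓝[>] 0)
      (fun u => (s.sup' hs (g · (t + u)) - s.sup' hs (g · t)) / u) := by
  refine isBoundedUnder_of_eventually_ge (a := d - 1) ?_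
  filter_upwards [eventually_add_mul_lt_of_hasDerivAt hd (sub_one_lt d), self_mem_nhdsWithin]
    with u hu (hu0 : 0 < u)
  rw [le_div_iff₀ hu0, ← hmax]
  linarith [le_sup' (g · (t + u)) hi]

theorem limsup_slope_le_of_eq_sup' {G : ℝ → ℝ} (hG : ∀ u, G u = s.sup' hs (g · u)) {A : ℝ}
    (hcont : ∀ i ∈ s, ContinuousAt (g i) t)
    (hderiv : ∀ i ∈ s, g i t = G t → ∃ d ≤ A, HasDerivAt (g i) d t) :
    limsup (fun u => (G (t + u) - G t) / u) (𝓝[>] 0) ≤ A := by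
  obtain rfl : G = _ := funext hG
  -- `limsup` in `ℝ` is junk unless the quotient is bounded below; a maximizing entry bounds it.
  obtain ⟨i, hi, hmax⟩ := exists_mem_eq_sup' hs (g · t)
  obtain ⟨d, -, hd⟩ := hderiv i hi hmax.symm
  have hcobdd := (isBoundedUnder_ge_slope_sup' hs hi hmax.symm hd).isCoboundedUnder_le
  refine le_of_forall_gt_imp_ge_of_dense fun b hAb => limsup_le_of_le hcobdd ?_
  have hderiv' : ∀ i ∈ s, g i t = s.sup' hs (g · t) → ∃ d < b, HasDerivAt (g i) d t :=
    fun i hi hmax => (hderiv i hi hmax).imp fun d ⟨hdA, hd⟩ => ⟨hdA.trans_lt hAb, hd⟩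
  filter_upwards [eventually_sup'_le_add_mul hs hcont hderiv', self_mem_nhdsWithin]
    with u hu (hu0 : 0 < u)
  rw [div_le_iff₀ hu0]
  linarith

end FiniteMax

theorem Complex.inner_mul_self_right (w z : ℂ) : ⟪z, w * z⟫ = w.re * ‖z‖ ^ 2 := by
  rw [Complex.inner, mul_assoc, Complex.mul_conj, Complex.normSq_eq_norm_sq,
    Complex.re_mul_ofReal]

theorem re_sum_add_le {N : ℕ} {M : ℝ} {z : Fin N → Fin N → ℂ} (hz : ∀ k l, ‖z k l‖ ≤ M)
    (i j : Fin N) : (∑ k, (z i k + z k j)).re ≤ 2 * N * M := by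
  calc (∑ k, (z i k + z k j)).re ≤ ∑ k, ‖z i k + z k j‖ :=
        (Complex.re_le_norm _).trans (norm_sum_le _ _)
    _ ≤ ∑ _k : Fin N, 2 * M :=
        sum_le_sum fun k _ => (norm_add_le _ _).trans (by linarith [hz i k, hz k j])
    _ = 2 * N * M := by rw [sum_const, card_univ, Fintype.card_fin, nsmul_eq_mul]; ring

theorem inner_drift_le_of_norm_le {N : ℕ} {κ M c : ℝ} (hκ : 0 ≤ κ) {z : Fin N → Fin N → ℂ} {e : ℂ}
    (hz : ∀ k l, ‖z k l‖ ≤ M) {i j : Fin N} (hij : ‖z i j‖ = M) (he : ‖e‖ ≤ c * M) :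
    ⟪z i j, -2 * (κ : ℂ) * z i j + ((κ : ℂ) / (N : ℂ)) * ∑ k, (z i k + z k j) * z i j + e⟫ ≤
      M * (-2 * κ * M + 2 * κ * M ^ 2 + c * M) := by
  set S := ∑ k, (z i k + z k j)
  have hN : (N : ℝ) ≠ 0 := Nat.cast_ne_zero.2 (Fin.pos i).ne'
  have hrate : (((-2 * κ : ℝ) : ℂ) + ((κ / N : ℝ) : ℂ) * S).re ≤ -2 * κ + 2 * κ * M := by
    rw [Complex.add_re, Complex.ofReal_re, Complex.re_ofReal_mul]
    calc -2 * κ + κ / N * S.re ≤ -2 * κ + κ / N * (2 * N * M) := by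
          gcongr; exact re_sum_add_le hz i j
      _ = -2 * κ + 2 * κ * M := by field_simp
  have hv : -2 * (κ : ℂ) * z i j + ((κ : ℂ) / (N : ℂ)) * ∑ k, (z i k + z k j) * z i j + e =
      (((-2 * κ : ℝ) : ℂ) + ((κ / N : ℝ) : ℂ) * S) * z i j + e := by
    rw [← sum_mul]; push_cast; ring
  have he' : ⟪z i j, e⟫ ≤ M * (c * M) := by
    calc ⟪z i j, e⟫ ≤ ‖z i j‖ * ‖e‖ := real_inner_le_norm _ _
      _ ≤ M * (c * M) := by rw [hij]; exact mul_le_mul_of_nonneg_left he (hij ▸ norm_nonneg _)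
  rw [hv, inner_add_right, Complex.inner_mul_self_right, hij]
  nlinarith [mul_le_mul_of_nonneg_right hrate (sq_nonneg M)]

theorem stmt_14_general (N : ℕ) (hN : 0 < N) (κ : ℝ) (hκ : 0 < κ)
    (h E : Fin N → Fin N → ℝ → ℂ)
    (DΘ : ℝ → ℝ)
    (D : ℝ → ℝ)
    (hD : ∀ t, D t = Finset.sup' Finset.univ ⟨(⟨0, hN⟩, ⟨0, hN⟩), Finset.mem_univ _⟩
      (fun p : Fin N × Fin N => ‖1 - h p.1 p.2 t‖))
    (hd : ∀ i j t, HasDerivAt (fun s => 1 - h i j s)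
      (-2 * (κ : ℂ) * (1 - h i j t) +
        ((κ : ℂ) / (N : ℂ)) * ∑ k, ((1 - h i k t) + (1 - h k j t)) * (1 - h i j t) +
        E i j t) t)
    (hE : ∀ i j t, ‖E i j t‖ ≤ 12 * κ * Real.sin (DΘ t / 2) * D t) :
    ∀ t, Filter.limsup (fun s => (D (t + s) - D t) / s) (nhdsWithin 0 (Set.Ioi 0)) ≤
      -2 * κ * (1 - 6 * Real.sin (DΘ t / 2)) * D t + 2 * κ * (D t) ^ 2 := by
  intro t
  refine limsup_slope_le_of_eq_sup' _ hD (fun p _ => (hd p.1 p.2 t).continuousAt.norm)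
    fun ⟨i, j⟩ _ hmax => ?_
  have hle : ∀ k l, ‖1 - h k l t‖ ≤ D t := fun k l =>
    (hD t).symm ▸ le_sup' (fun p : Fin N × Fin N => ‖1 - h p.1 p.2 t‖) (mem_univ (k, l))
  rcases eq_or_ne (1 - h i j t) 0 with h0 | h0
  · have hDt : D t = 0 := by rw [← hmax, h0, norm_zero]
    have hE0 : E i j t = 0 := norm_le_zero_iff.1 (by simpa [hDt] using hE i j t)
    refine ⟨0, by simp [hDt], HasDerivAt.norm_of_eq_zero ?_ h0⟩
    simpa [h0, hE0] using hd i j t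
  · refine ⟨_, ?_, (hd i j t).norm h0⟩
    rw [div_le_iff₀ (norm_pos_iff.2 h0), hmax]
    linarith [inner_drift_le_of_norm_le (z := fun k l => 1 - h k l t) hκ.le hle hmax (hE i j t)]

theorem stmt_14 (N : ℕ) (hN : 0 < N) (κ : ℝ) (hκ : 0 < κ)
    (h E : Fin N → Fin N → ℝ → ℂ)
    (DΘ : ℝ → ℝ) (hDΘ : Continuous DΘ) (hDΘ0 : ∀ t, 0 ≤ DΘ t)
    (D : ℝ → ℝ)
    (hD : ∀ t, D t = Finset.sup' Finset.univ ⟨(⟨0, hN⟩, ⟨0, hN⟩), Finset.mem_univ _⟩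
      (fun p : Fin N × Fin N => ‖1 - h p.1 p.2 t‖))
    (hb : ∀ i j t, ‖h i j t‖ ≤ 1)
    (hd : ∀ i j t, HasDerivAt (fun s => 1 - h i j s)
      (-2 * (κ : ℂ) * (1 - h i j t) +
        ((κ : ℂ) / (N : ℂ)) * ∑ k, ((1 - h i k t) + (1 - h k j t)) * (1 - h i j t) +
        E i j t) t)
    (hE : ∀ i j t, ‖E i j t‖ ≤ 12 * κ * Real.sin (DΘ t / 2) * D t) :
    ∀ t, Filter.limsup (fun s => (D (t + s) - D t) / s) (nhdsWithin 0 (Set.Ioi 0)) ≤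
      -2 * κ * (1 - 6 * Real.sin (DΘ t / 2)) * D t + 2 * κ * (D t) ^ 2 :=
  stmt_14_general N hN κ hκ h E DΘ D hD hd hE
end
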